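/- arXiv:1606.02982 — 5 statements merged into one kernel-verified Lean document; each statement's English description precedes it below -/
import Mathlib

section
/- Let π2 : ℝ^n → ℝ^{n−k} be the projection to the last n − k coordinates. Suppose C1 and C2 are line-free cones in ℝ^n such that π2(C1) and π2(C2) are line-free cones and C1 ∩ C2 ∩ (ℝ^k × {0}^{n−k}) = {0}. Then for any u, v ∈ ℝ^n, the set (C1 + u) ∩ (C2 + v) ∩ (ℝ^k × {0}^{n−k}) is bounded. -/
/-- A cone in a real topological vector space: topologically closed and closed under
nonnegative linear combinations. -/
def IsCone {E : Type*} [AddCommGroup E] [Module ℝ E] [TopologicalSpace E] (C : Set E) : Prop :=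
  IsClosed C ∧ ∀ u ∈ C, ∀ v ∈ C, ∀ l m : ℝ, 0 ≤ l → 0 ≤ m → l • u + m • v ∈ C

/-- A cone is line-free if it contains no nonzero vector together with its opposite. -/
def IsLineFree {E : Type*} [AddCommGroup E] (C : Set E) : Prop :=
  ∀ u ∈ C, -u ∈ C → u = 0

/-- We model ℝⁿ with its first `k` and last `n - k` coordinates separated, as the product
`(Fin k → ℝ) × (Fin m → ℝ)` (so `n = k + m`); the projection `π₂` to the last `n - k`
coordinates is `Prod.snd`, and `ℝ^k × {0}^{n-k}` is the set of points with vanishing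
second component. -/
theorem bounded_inter_of_opposition (k m : ℕ)
    (C1 C2 : Set ((Fin k → ℝ) × (Fin m → ℝ)))
    (hC1 : IsCone C1) (hC1' : IsLineFree C1) (hC2 : IsCone C2) (hC2' : IsLineFree C2)
    (hp1 : IsCone (Prod.snd '' C1) ∧ IsLineFree (Prod.snd '' C1))
    (hp2 : IsCone (Prod.snd '' C2) ∧ IsLineFree (Prod.snd '' C2))
    (hopp : C1 ∩ C2 ∩ {p : (Fin k → ℝ) × (Fin m → ℝ) | p.2 = 0} = {0})
    (u v : (Fin k → ℝ) × (Fin m → ℝ)) :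
    Bornology.IsBounded ((((fun p => p + u) '' C1) ∩ ((fun p => p + v) '' C2)) ∩ {p : (Fin k → ℝ) × (Fin m → ℝ) | p.2 = 0}) := by
  by_contra hB
  rw [isBounded_iff_forall_norm_le] at hB
  push_neg at hB
  choose x hxS hxn using fun n : ℕ => hB n
  have hxpos : ∀ n : ℕ, (0:ℝ) < ‖x n‖ := fun n => lt_of_le_of_lt (Nat.cast_nonneg n) (hxn n)
  have hnorm_top : Filter.Tendsto (fun n => ‖x n‖) Filter.atTop Filter.atTop :=
    Filter.tendsto_atTop_mono (fun n => (hxn n).le) tendsto_natCast_atTop_atTop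
  set w : ℕ → (Fin k → ℝ) × (Fin m → ℝ) := fun n => ‖x n‖⁻¹ • x n with hw
  have hwsph : ∀ n, w n ∈ Metric.sphere (0 : (Fin k → ℝ) × (Fin m → ℝ)) 1 := by
    intro n
    simp [hw, norm_smul, abs_of_pos (inv_pos.2 (hxpos n)), inv_mul_cancel₀ (hxpos n).ne']
  obtain ⟨L, hLsph, φ, hφ, hconv⟩ :=
    (isCompact_sphere (0 : (Fin k → ℝ) × (Fin m → ℝ)) 1).tendsto_subseq hwsph
  -- inverse norms tend to 0 along φ
  have hinv0 : Filter.Tendsto (fun n => ‖x (φ n)‖⁻¹) Filter.atTop (nhds 0) :=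
    Filter.Tendsto.comp tendsto_inv_atTop_zero (hnorm_top.comp hφ.tendsto_atTop)
  -- membership extraction
  have hmem : ∀ (C : Set ((Fin k → ℝ) × (Fin m → ℝ))) (a : (Fin k → ℝ) × (Fin m → ℝ)),
      (IsClosed C ∧ ∀ u ∈ C, ∀ v ∈ C, ∀ l m : ℝ, 0 ≤ l → 0 ≤ m → l • u + m • v ∈ C) →
      (∀ n, x n ∈ (fun p => p + a) '' C) → L ∈ C := by
    intro C a hC hx
    have h0 : (0 : (Fin k → ℝ) × (Fin m → ℝ)) ∈ C := by
      obtain ⟨c, hc, -⟩ := hx 0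
      simpa using hC.2 c hc c hc 0 0 le_rfl le_rfl
    have hs : ∀ n, ‖x n‖⁻¹ • (x n - a) ∈ C := by
      intro n
      obtain ⟨c, hc, hce⟩ := hx n
      have : x n - a = c := by rw [← hce]; simp
      rw [this]
      simpa using hC.2 c hc 0 h0 (‖x n‖⁻¹) 0 (inv_nonneg.2 (hxpos n).le) le_rfl
    have hlim : Filter.Tendsto (fun n => ‖x (φ n)‖⁻¹ • (x (φ n) - a)) Filter.atTop (nhds L) := by
      have : (fun n => ‖x (φ n)‖⁻¹ • (x (φ n) - a)) =
          fun n => w (φ n) - ‖x (φ n)‖⁻¹ • a := by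
        funext n; simp [hw, smul_sub]
      rw [this]
      simpa using (hconv.sub (hinv0.smul_const a))
    exact hC.1.mem_of_tendsto hlim (Filter.Eventually.of_forall fun n => hs (φ n))
  have hL1 : L ∈ C1 := hmem C1 u hC1 fun n => (hxS n).1.1
  have hL2 : L ∈ C2 := hmem C2 v hC2 fun n => (hxS n).1.2
  have hLsnd : L.2 = 0 := by
    have hz : ∀ n, (w (φ n)).2 = 0 := by
      intro n
      have := (hxS (φ n)).2
      simp only [Set.mem_setOf_eq] at this
      simp [hw, this]
    have : Filter.Tendsto (fun n => (w (φ n)).2) Filter.atTop (nhds L.2) :=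
      (continuous_snd.tendsto L).comp hconv
    have h0 : Filter.Tendsto (fun n => (w (φ n)).2) Filter.atTop (nhds 0) := by
      simp only [hz]; exact tendsto_const_nhds
    exact tendsto_nhds_unique this h0
  have : L ∈ C1 ∩ C2 ∩ {p : (Fin k → ℝ) × (Fin m → ℝ) | p.2 = 0} := ⟨⟨hL1, hL2⟩, hLsnd⟩
  rw [hopp] at this
  have : L = 0 := this
  rw [this] at hLsph
  simp at hLsph
end

section
/- Let π2 : ℝ^n → ℝ^{n−k} be the projection to the last n−k coordinates and let τ : ℝ^{2n} → ℝ^{(n−k)+n} be the map (u, w) ↦ (π2(u), w). If C1, C2 ⊆ ℝ^n are cones in opposition with respect to the first k variables, then the set {(π2(u), v − u) : u ∈ C1, v ∈ C2} is a line-free cone in ℝ^{(n−k)+n}. -/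
/-!
The set is the image of the cone `C1 × C2` under the linear map `τ (u, v) = (π₂ u, v - u)`, and
opposition says exactly that `ker τ` meets `C1 × C2` only in `0`. A linear map with this property
on a closed cone `K` in finite dimension satisfies `c ‖x‖ ≤ ‖f x‖` on `K` (minimise `‖f‖` over the
compact set `K ∩ sphere 0 1`), so it is proper on `K` and `f '' K` is closed. Line-freeness passes
to the image because `f x = -f y` forces `x + y ∈ K ∩ ker f = {0}`.
-/

lemma IsLineFree.prod {E F : Type*} [AddCommGroup E] [AddCommGroup F] {K : Set E} {L : Set F}
    (hK : IsLineFree K) (hL : IsLineFree L) : IsLineFree (K ×ˢ L) := fun x hx hnx =>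
  Prod.ext (hK x.1 hx.1 hnx.1) (hL x.2 hx.2 hnx.2)

lemma IsLineFree.image {E F : Type*} [AddCommGroup E] [Module ℝ E] [AddCommGroup F] [Module ℝ F]
    {K : Set E} (hK : IsLineFree K) (hadd : ∀ x ∈ K, ∀ y ∈ K, x + y ∈ K) (f : E →ₗ[ℝ] F)
    (hf : ∀ x ∈ K, f x = 0 → x = 0) : IsLineFree (f '' K) := by
  rintro _ ⟨x, hx, rfl⟩ ⟨y, hy, hxy⟩
  have hsum : x + y = 0 := hf _ (hadd x hx y hy) (by rw [map_add, hxy, add_neg_cancel])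
  rw [hK x hx (neg_eq_of_add_eq_zero_right hsum ▸ hy), map_zero]

section Topological

variable {E F : Type*} [AddCommGroup E] [Module ℝ E] [TopologicalSpace E]
  [AddCommGroup F] [Module ℝ F] [TopologicalSpace F] {K : Set E}

lemma IsCone.smul_mem (hK : IsCone K) {x : E} (hx : x ∈ K) {c : ℝ} (hc : 0 ≤ c) : c • x ∈ K := by
  simpa using hK.2 x hx x hx c 0 hc le_rfl

lemma IsCone.add_mem (hK : IsCone K) {x y : E} (hx : x ∈ K) (hy : y ∈ K) : x + y ∈ K := by
  simpa using hK.2 x hx y hy 1 1 zero_le_one zero_le_one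

lemma IsCone.prod {L : Set F} (hK : IsCone K) (hL : IsCone L) : IsCone (K ×ˢ L) :=
  ⟨hK.1.prod hL.1, fun _ hx _ hy l m hl hm =>
    ⟨hK.2 _ hx.1 _ hy.1 l m hl hm, hL.2 _ hx.2 _ hy.2 l m hl hm⟩⟩

end Topological

section Normed

variable {E F : Type*} [NormedAddCommGroup E] [NormedSpace ℝ E] [ProperSpace E]
  [NormedAddCommGroup F] [NormedSpace ℝ F] {K : Set E}

lemma IsCone.exists_pos_mul_norm_le_norm_apply (hK : IsCone K) (f : E →L[ℝ] F)
    (hf : ∀ x ∈ K, f x = 0 → x = 0) : ∃ c > 0, ∀ x ∈ K, c * ‖x‖ ≤ ‖f x‖ := by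
  have hcpt : IsCompact (K ∩ Metric.sphere 0 1) := (isCompact_sphere 0 1).inter_left hK.1
  obtain ⟨c, hc, hcle⟩ := hcpt.exists_forall_le' (f := fun x => ‖f x‖)
    (by fun_prop) (a := 0) fun x ⟨hxK, hx1⟩ => norm_pos_iff.2 fun h0 =>
      ne_zero_of_mem_unit_sphere ⟨x, hx1⟩ (hf x hxK h0)
  refine ⟨c, hc, fun x hx => ?_⟩
  rcases eq_or_ne x 0 with rfl | hx0
  · simp
  have hxpos : 0 < ‖x‖ := norm_pos_iff.2 hx0
  have hunit := hcle (‖x‖⁻¹ • x) ⟨hK.smul_mem hx (inv_nonneg.2 hxpos.le), by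
    simp [norm_smul, hxpos.ne']⟩
  rw [map_smul, norm_smul, norm_inv, norm_norm, le_inv_mul_iff₀ hxpos] at hunit
  linarith

lemma IsCone.isClosed_image (hK : IsCone K) (f : E →L[ℝ] F)
    (hf : ∀ x ∈ K, f x = 0 → x = 0) : IsClosed (f '' K) := by
  obtain ⟨c, hc, hcf⟩ := hK.exists_pos_mul_norm_le_norm_apply f hf
  have hproper : IsProperMap (fun x : K => f x) := by
    refine isProperMap_iff_isCompact_preimage.2 ⟨by fun_prop, fun L hL => ?_⟩
    have himage : ((↑) '' ((fun x : K => f x) ⁻¹' L) : Set E) = K ∩ f ⁻¹' L := by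
      ext x; simp [and_comm]
    obtain ⟨R, hR⟩ := hL.isBounded.subset_closedBall 0
    rw [Subtype.isCompact_iff, himage]
    refine Metric.isCompact_of_isClosed_isBounded (hK.1.inter (hL.isClosed.preimage f.continuous))
      ((Metric.isBounded_closedBall (x := 0) (r := R / c)).subset fun x ⟨hxK, hxL⟩ => ?_)
    have hfx : ‖f x‖ ≤ R := mem_closedBall_zero_iff.1 (hR hxL)
    rw [mem_closedBall_zero_iff, le_div_iff₀ hc]
    linarith [hcf x hxK]
  simpa [Set.image_eq_range] using hproper.isClosedMap.isClosed_range

lemma IsCone.image (hK : IsCone K) (f : E →L[ℝ] F) (hf : ∀ x ∈ K, f x = 0 → x = 0) :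
    IsCone (f '' K) := by
  refine ⟨hK.isClosed_image f hf, ?_⟩
  rintro _ ⟨x, hx, rfl⟩ _ ⟨y, hy, rfl⟩ l m hl hm
  exact ⟨l • x + m • y, hK.2 x hx y hy l m hl hm, by simp⟩

end Normed

/-- `ℝⁿ` is modelled as `(Fin k → ℝ) × (Fin m → ℝ)` with `n = k + m`, and `π₂ = Prod.snd`. -/
theorem tau_star_lineFree_cone_general (k m : ℕ)
    (C1 C2 : Set ((Fin k → ℝ) × (Fin m → ℝ)))
    (hC1 : IsCone C1) (hC1' : IsLineFree C1) (hC2 : IsCone C2) (hC2' : IsLineFree C2)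
    (hopp : C1 ∩ C2 ∩ {p : (Fin k → ℝ) × (Fin m → ℝ) | p.2 = 0} = {0}) :
    IsCone {q : (Fin m → ℝ) × ((Fin k → ℝ) × (Fin m → ℝ)) |
        ∃ u ∈ C1, ∃ v ∈ C2, q = (u.2, v - u)} ∧
    IsLineFree {q : (Fin m → ℝ) × ((Fin k → ℝ) × (Fin m → ℝ)) |
        ∃ u ∈ C1, ∃ v ∈ C2, q = (u.2, v - u)} := by
  let E := (Fin k → ℝ) × (Fin m → ℝ)
  let τ : E × E →L[ℝ] (Fin m → ℝ) × E :=
    ((ContinuousLinearMap.snd ℝ _ _).comp (ContinuousLinearMap.fst ℝ E E)).prod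
      (ContinuousLinearMap.snd ℝ E E - ContinuousLinearMap.fst ℝ E E)
  have hset : {q : (Fin m → ℝ) × E | ∃ u ∈ C1, ∃ v ∈ C2, q = (u.2, v - u)} = τ '' (C1 ×ˢ C2) := by
    ext q
    constructor
    · rintro ⟨u, hu, v, hv, rfl⟩
      exact ⟨(u, v), ⟨hu, hv⟩, rfl⟩
    · rintro ⟨⟨u, v⟩, ⟨hu, hv⟩, rfl⟩
      exact ⟨u, hu, v, hv, rfl⟩
  have hker : ∀ p ∈ C1 ×ˢ C2, τ p = 0 → p = 0 := by
    rintro ⟨u, v⟩ ⟨hu, hv⟩ hτ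
    obtain ⟨hu2, hvu⟩ : u.2 = 0 ∧ v - u = 0 := Prod.ext_iff.1 hτ
    obtain rfl : v = u := sub_eq_zero.1 hvu
    have hv0 : v = 0 := hopp.subset ⟨⟨hu, hv⟩, hu2⟩
    simp [hv0]
  rw [hset]
  exact ⟨(hC1.prod hC2).image τ hker,
    (hC1'.prod hC2').image (fun _ hx _ hy => (hC1.prod hC2).add_mem hx hy) τ.toLinearMap hker⟩

/-- ℝⁿ is modelled as `(Fin k → ℝ) × (Fin m → ℝ)` with `n = k + m`; `π₂ = Prod.snd`.
If `C1, C2` are line-free cones in opposition with respect to the first `k` variables,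
then `{(π₂ u, v − u) : u ∈ C1, v ∈ C2}` is a line-free cone in `ℝ^{(n−k)+n}`. -/
theorem tau_star_lineFree_cone (k m : ℕ)
    (C1 C2 : Set ((Fin k → ℝ) × (Fin m → ℝ)))
    (hC1 : IsCone C1) (hC1' : IsLineFree C1) (hC2 : IsCone C2) (hC2' : IsLineFree C2)
    (hp1 : IsCone (Prod.snd '' C1) ∧ IsLineFree (Prod.snd '' C1))
    (hp2 : IsCone (Prod.snd '' C2) ∧ IsLineFree (Prod.snd '' C2))
    (hopp : C1 ∩ C2 ∩ {p : (Fin k → ℝ) × (Fin m → ℝ) | p.2 = 0} = {0}) :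
    IsCone {q : (Fin m → ℝ) × ((Fin k → ℝ) × (Fin m → ℝ)) |
        ∃ u ∈ C1, ∃ v ∈ C2, q = (u.2, v - u)} ∧
    IsLineFree {q : (Fin m → ℝ) × ((Fin k → ℝ) × (Fin m → ℝ)) |
        ∃ u ∈ C1, ∃ v ∈ C2, q = (u.2, v - u)} :=
  tau_star_lineFree_cone_general k m C1 C2 hC1 hC1' hC2 hC2' hopp
end

section
/- Each of the Laurent series s₁(t) = 1/t, s₂(t) = (4t² − 8t + 1)/t³, s₃(t) = (12t² − 1)/t³, and s₄(t) = h(t)/t³ (where h ∈ ℚ[[t]] is the unique series with h(0)=1, h² = (1−6t)³(1+2t)) is annihilated by the linear differential operator L = t³(2t+1)(6t−1)∂t⁴ + 4t²(48t² + 13t − 3)∂t³ + 36t(3t+1)(8t−1)∂t² + (1152t² + 168t − 24)∂t + (288t + 24), acting on formal Laurent series in t. -/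
/-!
Each solution has the shape `q * w / m ^ k` where `w` satisfies a first-order equation
`m * D w = r * w`: for the rational solutions `w = 1`, `m = t`, `r = 0`, and for `h / t³` one takes
`m = t (1 - 6t) (1 + 2t)`, `r = 12t² + 4t - 3`, obtained by differentiating `h² = (1 - 6t)³ (1 + 2t)`.
Then `Dʲ (q * w / m ^ k) = qⱼ * w / m ^ (k + j)` with `qⱼ₊₁ = D qⱼ * m + qⱼ * r - (k + j) * qⱼ * D m`,
so `L (q * w / m ^ k) = 0` reduces to a polynomial identity in `t`. Only `D t = 1` and the Leibniz
rule enter; this suffices for `h` because `h` is algebraic over `ℚ(t)`.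
-/

open PowerSeries

namespace Derivation

variable {R A M : Type*} [CommSemiring R] [CommSemiring A] [AddCommMonoid M] [Algebra R A]
  [Module A M] [Module R M]

@[simp]
theorem map_ofNat (D : Derivation R A M) (n : ℕ) [n.AtLeastTwo] :
    D (no_index (OfNat.ofNat n : A)) = 0 :=
  D.map_natCast n

end Derivation

section

set_option linter.overlappingInstances false

-- `Module R K` is not required to come from `Algebra R K`: on `ℚ((t))` the two `ℚ`-actions are
-- not definitionally equal, and the derivation of the theorem uses the former.
variable {R K : Type*} [CommRing R] [Field K] [Algebra R K] [Module R K] (D : Derivation R K K)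

def operatorL (t f : K) : K :=
  t ^ 3 * (2 * t + 1) * (6 * t - 1) * (⇑D)^[4] f
    + 4 * t ^ 2 * (48 * t ^ 2 + 13 * t - 3) * (⇑D)^[3] f
    + 36 * t * (3 * t + 1) * (8 * t - 1) * (⇑D)^[2] f
    + (1152 * t ^ 2 + 168 * t - 24) * D f
    + (288 * t + 24) * f

namespace Derivation

def twistedDeriv (m r : K) (k : ℕ) (q : K) : K :=
  D q * m + q * r - k * q * D m

def twistedDerivIter (m r : K) (k : ℕ) : ℕ → K → K
  | 0, q => q
  | j + 1, q => D.twistedDeriv m r (k + j) (twistedDerivIter m r k j q)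

variable {D} {m r w : K}

theorem apply_mul_div_pow (hm : m ≠ 0) (hw : m * D w = r * w) (q : K) (k : ℕ) :
    D (q * w / m ^ k) = D.twistedDeriv m r k q * w / m ^ (k + 1) := by
  rw [leibniz_div, twistedDeriv]
  simp only [leibniz, leibniz_pow, smul_eq_mul, nsmul_eq_mul]
  rcases k with _ | k
  · field_simp
    linear_combination q * hw
  · simp only [Nat.add_sub_cancel]
    field_simp
    push_cast
    linear_combination q * m ^ (2 * k + 2) * hw

theorem iterate_apply_mul_div_pow (hm : m ≠ 0) (hw : m * D w = r * w) (q : K) (k j : ℕ) :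
    (⇑D)^[j] (q * w / m ^ k) = D.twistedDerivIter m r k j q * w / m ^ (k + j) := by
  induction j with
  | zero => rfl
  | succ j ih =>
    rw [Function.iterate_succ_apply', ih, apply_mul_div_pow hm hw, twistedDerivIter, add_assoc]

end Derivation

def twistedOperatorL (t m r : K) (k : ℕ) (q : K) : K :=
  t ^ 3 * (2 * t + 1) * (6 * t - 1) * D.twistedDerivIter m r k 4 q
    + 4 * t ^ 2 * (48 * t ^ 2 + 13 * t - 3) * D.twistedDerivIter m r k 3 q * m
    + 36 * t * (3 * t + 1) * (8 * t - 1) * D.twistedDerivIter m r k 2 q * m ^ 2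
    + (1152 * t ^ 2 + 168 * t - 24) * D.twistedDerivIter m r k 1 q * m ^ 3
    + (288 * t + 24) * q * m ^ 4

variable {D} {m r w t : K}

theorem operatorL_mul_div_pow (hm : m ≠ 0) (hw : m * D w = r * w) (q : K) (k : ℕ) :
    operatorL D t (q * w / m ^ k) = twistedOperatorL D t m r k q * w / m ^ (k + 4) := by
  have h1 := D.iterate_apply_mul_div_pow hm hw q k 1
  rw [Function.iterate_one] at h1
  simp only [operatorL, twistedOperatorL, h1, Derivation.iterate_apply_mul_div_pow hm hw]
  field_simp
  ring

theorem operatorL_mul_div_pow_eq_zero (hm : m ≠ 0) (hw : m * D w = r * w) {q : K} {k : ℕ}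
    (hq : twistedOperatorL D t m r k q = 0) : operatorL D t (q * w / m ^ k) = 0 := by
  rw [operatorL_mul_div_pow hm hw, hq, zero_mul, zero_div]

variable (hD : D t = 1)
include hD

theorem operatorL_quadratic_div_cube (ht : t ≠ 0) {a b c : K} (ha : D a = 0) (hb : D b = 0)
    (hc : D c = 0) : operatorL D t ((a * t ^ 2 + b * t + c) / t ^ 3) = 0 := by
  simpa using operatorL_mul_div_pow_eq_zero (w := 1) (r := 0) (q := a * t ^ 2 + b * t + c) (k := 3)
    ht (by simp) <| by
      simp only [twistedOperatorL, Derivation.twistedDerivIter, Derivation.twistedDeriv, map_add,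
        map_sub, Derivation.leibniz, Derivation.leibniz_pow, Derivation.map_ofNat, Nat.add_one_sub_one,
        Nat.reduceAdd, Nat.cast_ofNat, pow_one, smul_eq_mul, nsmul_eq_mul, hD, ha, hb, hc, mul_one,
        mul_zero, add_zero, zero_add, sub_self]
      ring

theorem operatorL_div_cube_of_sq_eq (h2 : (2 : K) ≠ 0) {h : K}
    (hm : t * (1 - 6 * t) * (1 + 2 * t) ≠ 0) (hh : h ^ 2 = (1 - 6 * t) ^ 3 * (1 + 2 * t)) :
    operatorL D t (h / t ^ 3) = 0 := by
  have ht : t ≠ 0 := left_ne_zero_of_mul (left_ne_zero_of_mul hm)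
  have hu : 1 - 6 * t ≠ 0 := right_ne_zero_of_mul (left_ne_zero_of_mul hm)
  have hlog : (1 - 6 * t) * (1 + 2 * t) * D h = -8 * (1 + 3 * t) * h := by
    have hDsq := congrArg D hh
    simp only [map_add, map_sub, Derivation.leibniz, Derivation.leibniz_pow,
      Derivation.map_one_eq_zero, Derivation.map_ofNat, hD, smul_eq_mul, nsmul_eq_mul] at hDsq
    apply mul_left_cancel₀ (mul_ne_zero h2 (pow_ne_zero 2 hu))
    linear_combination (-2 * D h) * hh + h * hDsq
  have hw : t * (1 - 6 * t) * (1 + 2 * t) * D (h / t ^ 3)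
      = (12 * t ^ 2 + 4 * t - 3) * (h / t ^ 3) := by
    simp only [Derivation.leibniz_div, Derivation.leibniz_pow, Nat.add_one_sub_one, Nat.cast_ofNat,
      inv_pow, smul_eq_mul, nsmul_eq_mul, hD, mul_one]
    field_simp
    linear_combination t * hlog
  simpa using operatorL_mul_div_pow_eq_zero (q := 1) (k := 0) hm hw <| by
    simp only [twistedOperatorL, Derivation.twistedDerivIter, Derivation.twistedDeriv, map_add,
      map_sub, map_neg, Derivation.leibniz, Derivation.leibniz_pow, Derivation.map_one_eq_zero,
      Derivation.map_ofNat, Nat.add_one_sub_one, Nat.cast_ofNat, Nat.cast_zero, Nat.cast_one, pow_one,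
      smul_eq_mul, nsmul_eq_mul, hD, mul_one, one_mul, mul_zero, zero_mul, mul_neg, add_zero,
      zero_add, sub_zero, zero_sub, neg_zero]
    ring

end

theorem operator_annihilates_solutions_general (h : PowerSeries ℚ)
    (hh : h ^ 2 = (1 - 6 * X) ^ 3 * (1 + 2 * X))
    (D : Derivation ℚ (LaurentSeries ℚ) (LaurentSeries ℚ))
    (hD : D ((X : PowerSeries ℚ) : LaurentSeries ℚ) = 1) :
    let T : LaurentSeries ℚ := ((X : PowerSeries ℚ) : LaurentSeries ℚ)
    let d : LaurentSeries ℚ → LaurentSeries ℚ := fun f => D f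
    let L : LaurentSeries ℚ → LaurentSeries ℚ := fun f =>
      T ^ 3 * (2 * T + 1) * (6 * T - 1) * d^[4] f
        + 4 * T ^ 2 * (48 * T ^ 2 + 13 * T - 3) * d^[3] f
        + 36 * T * (3 * T + 1) * (8 * T - 1) * d^[2] f
        + (1152 * T ^ 2 + 168 * T - 24) * d f
        + (288 * T + 24) * f
    L (1 / T) = 0 ∧
    L ((4 * T ^ 2 - 8 * T + 1) / T ^ 3) = 0 ∧
    L ((12 * T ^ 2 - 1) / T ^ 3) = 0 ∧
    L ((h : LaurentSeries ℚ) / T ^ 3) = 0 := by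
  intro T d L
  have hL (f : LaurentSeries ℚ) : L f = operatorL D T f := rfl
  have hDT : D T = 1 := hD
  have hm : T * (1 - 6 * T) * (1 + 2 * T) ≠ 0 := by
    have : (X * (1 - 6 * X) * (1 + 2 * X) : PowerSeries ℚ) ≠ 0 := by
      refine mul_ne_zero (mul_ne_zero X_ne_zero ?_) ?_ <;>
        exact ne_of_apply_ne constantCoeff (by simp)
    simpa only [T, map_mul, map_add, map_sub, map_one, map_ofNat, map_zero]
      using (HahnSeries.ofPowerSeries_injective (Γ := ℤ) (R := ℚ)).ne this
  have ht : T ≠ 0 := left_ne_zero_of_mul (left_ne_zero_of_mul hm)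
  have hsq : (h : LaurentSeries ℚ) ^ 2 = (1 - 6 * T) ^ 3 * (1 + 2 * T) := by
    simpa only [map_pow, map_mul, map_add, map_sub, map_one, map_ofNat]
      using congrArg (HahnSeries.ofPowerSeries ℤ ℚ) hh
  -- kept local: a `CharZero` instance in scope would make `Algebra ℚ ℚ((t))` resolve to
  -- `DivisionRing.toRatAlgebra` instead of the instance in the type of `D`
  have h2 : (2 : LaurentSeries ℚ) ≠ 0 := by
    have : CharZero (LaurentSeries ℚ) :=
      charZero_of_injective_algebraMap (algebraMap ℚ (LaurentSeries ℚ)).injective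
    exact two_ne_zero
  simp only [hL]
  refine ⟨?_, ?_, ?_, operatorL_div_cube_of_sq_eq hDT h2 hm hsq⟩
  · convert operatorL_quadratic_div_cube (a := 1) (b := 0) (c := 0) hDT ht (by simp) (by simp)
      (by simp) using 2
    field_simp
    ring
  · convert operatorL_quadratic_div_cube (a := 4) (b := -8) (c := 1) hDT ht (by simp) (by simp)
      (by simp) using 3
    ring
  · convert operatorL_quadratic_div_cube (a := 12) (b := 0) (c := -1) hDT ht (by simp) (by simp)
      (by simp) using 3
    ring

/-- The operator `L = t³(2t+1)(6t−1)∂⁴ + 4t²(48t²+13t−3)∂³ + 36t(3t+1)(8t−1)∂²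
+ (1152t²+168t−24)∂ + (288t+24)` annihilates each of the Laurent series `s₁ = 1/t`,
`s₂ = (4t²−8t+1)/t³`, `s₃ = (12t²−1)/t³`, `s₄ = h/t³` where `h(0)=1`, `h² = (1−6t)³(1+2t)`.
Here `∂` is any derivation on `ℚ((t))` with `∂t = 1` (formal differentiation `d/dt`). -/
theorem operator_annihilates_solutions (h : PowerSeries ℚ)
    (hh0 : (constantCoeff : PowerSeries ℚ →+* ℚ) h = 1)
    (hh : h ^ 2 = (1 - 6 * X) ^ 3 * (1 + 2 * X))
    (D : Derivation ℚ (LaurentSeries ℚ) (LaurentSeries ℚ))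
    (hD : D ((X : PowerSeries ℚ) : LaurentSeries ℚ) = 1) :
    let T : LaurentSeries ℚ := ((X : PowerSeries ℚ) : LaurentSeries ℚ)
    let d : LaurentSeries ℚ → LaurentSeries ℚ := fun f => D f
    let L : LaurentSeries ℚ → LaurentSeries ℚ := fun f =>
      T ^ 3 * (2 * T + 1) * (6 * T - 1) * d^[4] f
        + 4 * T ^ 2 * (48 * T ^ 2 + 13 * T - 3) * d^[3] f
        + 36 * T * (3 * T + 1) * (8 * T - 1) * d^[2] f
        + (1152 * T ^ 2 + 168 * T - 24) * d f
        + (288 * T + 24) * f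
    L (1 / T) = 0 ∧
    L ((4 * T ^ 2 - 8 * T + 1) / T ^ 3) = 0 ∧
    L ((12 * T ^ 2 - 1) / T ^ 3) = 0 ∧
    L ((h : LaurentSeries ℚ) / T ^ 3) = 0 :=
  operator_annihilates_solutions_general h hh D hD
end

section
/- The Gauss hypergeometric series satisfy the duplication formula: as formal power series in u, (1 − u/2)^{1/2} · ₂F₁(1/2, 1/2; 1; u) = ₂F₁(1/4, 3/4; 1; (u/(2−u))²), where (1 − u/2)^{1/2} denotes the binomial series and (u/(2−u))² is expanded as a formal power series with zero constant term. -/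
open PowerSeries

/-- The Gauss hypergeometric series `₂F₁(a,b;1;t) = Σ (a)ₙ(b)ₙ/((1)ₙ n!) tⁿ` as a formal
power series over ℚ. -/
noncomputable def hyp (a b : ℚ) : PowerSeries ℚ :=
  PowerSeries.mk fun n =>
    ((ascPochhammer ℚ n).eval a * (ascPochhammer ℚ n).eval b) /
      ((ascPochhammer ℚ n).eval 1 * (n.factorial : ℚ))

/-- Composition `F(w(t))` of formal power series, valid when `w` has zero constant term. -/
noncomputable def pscomp (F w : PowerSeries ℚ) : PowerSeries ℚ :=
  PowerSeries.mk fun n => ∑ k ∈ Finset.range (n + 1), coeff (R := ℚ) k F * coeff (R := ℚ) n (w ^ k)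

/-!
With `θ = X • d/dX`, both sides solve `4(1 - X)(2 - X)² θ²y = X(4(2 - X)θy + 3Xy)`. For the
right side, `w = (X/(2 - X))²` satisfies `(2 - X)θw = 4w`, so `(2 - X) θ(K ∘ w) = 4 (θK) ∘ w` for
every `K`, and this turns the hypergeometric equation of `₂F₁(1/4, 3/4; 1)` in `w` into the
equation above. For the left side, `s = (1 - X/2)^{1/2}` satisfies `4 s θs = -X`, which turns the
equation of `₂F₁(1/2, 1/2; 1)` into the same one after multiplying by `s³`. Its indicial
equation at `0` is `m² = 0`, so a power series solution is determined by its constant term, and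
both sides have constant term `1`.
-/

namespace PowerSeries

instance instCharZero {R : Type*} [Semiring R] [CharZero R] : CharZero R⟦X⟧ :=
  ⟨fun m n h => by simpa using congrArg constantCoeff h⟩

variable {R : Type*} [CommRing R]

noncomputable def euler : Derivation R R⟦X⟧ R⟦X⟧ := (X : R⟦X⟧) • d⁄dX R

notation "θ" => PowerSeries.euler

theorem euler_apply (f : R⟦X⟧) : θ f = X * d⁄dX R f := rfl

theorem euler_X : θ (X : R⟦X⟧) = X := by
  rw [euler_apply, derivative_X, mul_one]

theorem euler_ofNat (n : ℕ) [n.AtLeastTwo] : θ (OfNat.ofNat n : R⟦X⟧) = 0 := by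
  rw [euler_apply, ← map_ofNat C n, derivative_C, mul_zero]

theorem coeff_euler (f : R⟦X⟧) (n : ℕ) : coeff n (θ f) = n * coeff n f := by
  rcases n with _ | n
  · simp [euler_apply]
  · rw [euler_apply, coeff_succ_X_mul, coeff_derivative]
    push_cast
    ring

theorem constantCoeff_euler (f : R⟦X⟧) : constantCoeff (θ f) = 0 := by
  simp [euler_apply]

theorem euler_X_pow_mul (m : ℕ) (g : R⟦X⟧) :
    θ (X ^ m * g) = X ^ m * ((m : R⟦X⟧) * g + θ g) := by
  have hXm : θ (X ^ m : R⟦X⟧) = (m : R⟦X⟧) * X ^ m := by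
    induction m with
    | zero => simp
    | succ m ih =>
      rw [pow_succ, Derivation.leibniz, ih, smul_eq_mul, smul_eq_mul, euler_X]
      push_cast
      ring
  rw [Derivation.leibniz, hXm, smul_eq_mul, smul_eq_mul]
  ring

theorem euler_subst {f g : R⟦X⟧} (hg : HasSubst g) :
    θ (f.subst g) = (d⁄dX R f).subst g * θ g := by
  rw [euler_apply, euler_apply, derivative_subst hg]
  ring

/-- If `y₁ - y₂ = X ^ (k + 1) * g` with `g(0) ≠ 0`, then the constant coefficient of the equation,
divided by `X ^ (k + 1)`, reads `P(0) (k + 1)² g(0) = 0`. -/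
theorem eq_of_euler_ode [IsDomain R] [CharZero R] {P Q S y₁ y₂ : R⟦X⟧}
    (hP : constantCoeff P ≠ 0)
    (h₁ : P * θ (θ y₁) = X * (Q * θ y₁ + S * y₁))
    (h₂ : P * θ (θ y₂) = X * (Q * θ y₂ + S * y₂))
    (h0 : constantCoeff y₁ = constantCoeff y₂) : y₁ = y₂ := by
  rw [← sub_eq_zero]
  by_contra hy
  have hode : P * θ (θ (y₁ - y₂)) = X * (Q * θ (y₁ - y₂) + S * (y₁ - y₂)) := by
    simp only [map_sub]
    linear_combination h₁ - h₂
  have hy0 : constantCoeff (y₁ - y₂) = 0 := by rw [map_sub, h0, sub_self]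
  generalize y₁ - y₂ = y at hy hode hy0
  obtain ⟨m, g, hg, rfl⟩ : ∃ (m : ℕ) (g : R⟦X⟧), constantCoeff g ≠ 0 ∧ y = X ^ m * g :=
    ⟨_, _, by rwa [Ne, constantCoeff_divXPowOrder_eq_zero_iff], X_pow_order_mul_divXPowOrder.symm⟩
  obtain ⟨k, rfl⟩ : ∃ k, m = k + 1 :=
    Nat.exists_eq_succ_of_ne_zero fun hm => hg (by simpa [hm] using hy0)
  rw [euler_X_pow_mul, euler_X_pow_mul] at hode
  set c : R⟦X⟧ := ((k + 1 : ℕ) : R⟦X⟧) with hc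
  have hcancel : P * (c * (c * g + θ g) + θ (c * g + θ g)) = X * (Q * (c * g + θ g) + S * g) :=
    mul_left_cancel₀ (pow_ne_zero (k + 1) X_ne_zero) (by linear_combination hode)
  have := congrArg constantCoeff hcancel
  simp [hc, constantCoeff_euler, hP, hg, Nat.cast_add_one_ne_zero] at this

theorem euler_two_sub_X : θ (2 - X : R⟦X⟧) = -X := by
  rw [map_sub, euler_ofNat, euler_X, zero_sub]

theorem two_sub_X_mul_euler_sq {v : R⟦X⟧} (hv : (2 - X) * v = X) :
    (2 - X) * θ (v ^ 2) = 4 * v ^ 2 := by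
  have hθv : (2 - X) * θ v - X * v = X := by
    have := congrArg θ hv
    rw [Derivation.leibniz, euler_two_sub_X, euler_X, smul_eq_mul, smul_eq_mul] at this
    linear_combination this
  rw [Derivation.leibniz_pow, nsmul_eq_mul, smul_eq_mul]
  linear_combination 2 * v * hθv - 2 * v * hv

theorem cube_mul_euler_of_two_mul_sq {s : R⟦X⟧} (hs : 2 * s ^ 2 = 2 - X) :
    8 * s ^ 3 * θ s = -X * (2 - X) ∧ 16 * s ^ 3 * θ (θ s) = -X * (4 - X) := by
  have hθs : 4 * s * θ s = -X := by
    have := congrArg θ hs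
    rw [Derivation.leibniz, Derivation.leibniz_pow, euler_ofNat, euler_two_sub_X] at this
    simp only [smul_eq_mul, nsmul_eq_mul] at this
    linear_combination this
  have hθθs : 4 * (θ s * θ s + s * θ (θ s)) = -X := by
    have := congrArg θ hθs
    rw [Derivation.leibniz, Derivation.leibniz, euler_ofNat, map_neg, euler_X] at this
    simp only [smul_eq_mul] at this
    linear_combination this
  exact ⟨by linear_combination 2 * s ^ 2 * hθs - X * hs,
    by linear_combination 4 * s ^ 2 * hθθs - (4 * s * θ s - X) * hθs - 2 * X * hs⟩

end PowerSeries

theorem coeff_hyp_succ (a b : ℚ) (n : ℕ) :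
    ((n : ℚ) + 1) ^ 2 * coeff (n + 1) (hyp a b) = (n + a) * (n + b) * coeff n (hyp a b) := by
  simp only [hyp, coeff_mk, ascPochhammer_succ_eval, ascPochhammer_eval_one, Nat.factorial_succ]
  have : (n.factorial : ℚ) ≠ 0 := by positivity
  field_simp
  push_cast
  ring

theorem constantCoeff_hyp (a b : ℚ) : constantCoeff (hyp a b) = 1 := by
  simp [← coeff_zero_eq_constantCoeff_apply, hyp]

/-- The equation `X(1 - X)F'' + (1 - (a + b + 1)X)F' = abF` of `₂F₁(a, b; 1; X)`, in the Euler
form `θ²F = X(θ + a)(θ + b)F`. -/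
def IsHypergeometric (a b : ℚ) (F : ℚ⟦X⟧) : Prop :=
  θ (θ F) = X * (θ (θ F) + C (a + b) * θ F + C (a * b) * F)

theorem isHypergeometric_hyp (a b : ℚ) : IsHypergeometric a b (hyp a b) := by
  ext n
  rcases n with _ | n
  · simp [coeff_euler]
  · rw [coeff_succ_X_mul]
    simp only [coeff_euler, LinearMap.map_add, coeff_C_mul]
    push_cast
    linear_combination coeff_hyp_succ a b n

theorem pscomp_eq_subst {F w : ℚ⟦X⟧} (hw : constantCoeff w = 0) : pscomp F w = F.subst w := by
  ext n
  rw [pscomp, coeff_mk, coeff_subst' (HasSubst.of_constantCoeff_zero' hw)]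
  refine (finsum_eq_sum_of_support_subset _ fun d hd => ?_).symm
  simp only [Finset.coe_range, Set.mem_Iio, Function.mem_support] at hd ⊢
  by_contra! h
  exact hd (by rw [X_pow_dvd_iff.mp (pow_dvd_pow_of_dvd (X_dvd_iff.mpr hw) d) n h, mul_zero])

theorem constantCoeff_pscomp (F w : ℚ⟦X⟧) : constantCoeff (pscomp F w) = constantCoeff F := by
  rw [← coeff_zero_eq_constantCoeff_apply, ← coeff_zero_eq_constantCoeff_apply, pscomp, coeff_mk]
  simp

section Duplication

variable {v : ℚ⟦X⟧}

theorem constantCoeff_sq_eq_zero_of_two_sub_X_mul (hv : (2 - X) * v = X) :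
    constantCoeff (v ^ 2) = 0 := by
  have hv0 : constantCoeff v = 0 := by simpa [map_ofNat] using congrArg constantCoeff hv
  simp [hv0]

theorem two_sub_X_mul_euler_subst_sq (hv : (2 - X) * v = X) (K : ℚ⟦X⟧) :
    (2 - X) * θ (K.subst (v ^ 2)) = 4 * (θ K).subst (v ^ 2) := by
  have hw := HasSubst.of_constantCoeff_zero' (constantCoeff_sq_eq_zero_of_two_sub_X_mul hv)
  rw [euler_subst hw, euler_apply K, subst_mul hw, subst_X hw]
  linear_combination (d⁄dX ℚ K).subst (v ^ 2) * two_sub_X_mul_euler_sq hv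

theorem duplication_ode_subst (hv : (2 - X) * v = X) {H : ℚ⟦X⟧}
    (hH : IsHypergeometric (1 / 4) (3 / 4) H) :
    4 * (1 - X) * (2 - X) ^ 2 * θ (θ (H.subst (v ^ 2))) =
      X * (4 * (2 - X) * θ (H.subst (v ^ 2)) + 3 * X * H.subst (v ^ 2)) := by
  have hsubst := HasSubst.of_constantCoeff_zero' (constantCoeff_sq_eq_zero_of_two_sub_X_mul hv)
  have hH' : 16 * θ (θ H) = X * (16 * θ (θ H) + 16 * θ H + 3 * H) := by
    have h : (16 : ℚ⟦X⟧) * C (3 / 16) = 3 := by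
      rw [← map_ofNat C 16, ← map_mul, ← map_ofNat C 3]; norm_num
    rw [IsHypergeometric] at hH
    norm_num at hH
    linear_combination 16 * hH + X * H * h
  have hHw := congrArg (substAlgHom hsubst) hH'
  simp only [map_mul, map_add, map_ofNat, coe_substAlgHom, subst_X hsubst] at hHw
  have hθG := two_sub_X_mul_euler_subst_sq hv H
  have hθθH := two_sub_X_mul_euler_subst_sq hv (θ H)
  have hθθG := congrArg θ hθG
  rw [Derivation.leibniz, euler_two_sub_X, Derivation.leibniz, euler_ofNat, smul_eq_mul,
    smul_eq_mul, smul_eq_mul, smul_zero] at hθθG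
  have hw : (2 - X) ^ 2 * v ^ 2 = X ^ 2 := by linear_combination ((2 - X) * v + X) * hv
  linear_combination 4 * (1 - X) * (2 - X) * hθθG + 16 * (1 - X) * hθθH + (2 - X) ^ 2 * hHw
    + (16 * (θ (θ H)).subst (v ^ 2) + 16 * (θ H).subst (v ^ 2) + 3 * H.subst (v ^ 2)) * hw
    - 4 * X ^ 2 * hθG

theorem duplication_ode_mul_sqrt {s F : ℚ⟦X⟧} (hs : s ^ 2 = 1 - C (1 / 2) * X)
    (hF : IsHypergeometric (1 / 2) (1 / 2) F) :
    4 * (1 - X) * (2 - X) ^ 2 * θ (θ (s * F)) =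
      X * (4 * (2 - X) * θ (s * F) + 3 * X * (s * F)) := by
  have hF' : 4 * θ (θ F) = X * (4 * θ (θ F) + 4 * θ F + F) := by
    have h : (4 : ℚ⟦X⟧) * C (1 / 4) = 1 := by rw [← map_ofNat C 4, ← map_mul]; norm_num
    rw [IsHypergeometric] at hF
    norm_num at hF
    linear_combination 4 * hF + X * F * h
  have hs2 : 2 * s ^ 2 = 2 - X := by
    have h : (2 : ℚ⟦X⟧) * C (1 / 2) = 1 := by rw [← map_ofNat C 2, ← map_mul]; norm_num
    linear_combination 2 * hs - X * h
  obtain ⟨hθs, hθθs⟩ := cube_mul_euler_of_two_mul_sq hs2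
  have hs4 : 4 * s ^ 4 = (2 - X) ^ 2 := by linear_combination (2 * s ^ 2 + 2 - X) * hs2
  have hs_ne : s ≠ 0 := by
    rintro rfl
    simpa using congrArg constantCoeff hs
  have hθsF : θ (s * F) = s * θ F + F * θ s := by
    rw [Derivation.leibniz, smul_eq_mul, smul_eq_mul]
  have hθθsF : θ (θ (s * F)) = s * θ (θ F) + 2 * θ s * θ F + F * θ (θ s) := by
    rw [hθsF, map_add, Derivation.leibniz, Derivation.leibniz, smul_eq_mul, smul_eq_mul,
      smul_eq_mul, smul_eq_mul]
    ring
  refine mul_left_cancel₀ (mul_ne_zero (by simp) (pow_ne_zero 3 hs_ne) : 16 * s ^ 3 ≠ 0) ?_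
  rw [hθθsF, hθsF]
  linear_combination (16 * (1 - X) * (2 - X) ^ 2 * θ (θ F) - 16 * X * (2 - X) * θ F
      - 12 * X ^ 2 * F) * hs4
    + (16 * (1 - X) * (2 - X) ^ 2 * θ F - 8 * X * (2 - X) * F) * hθs
    + 4 * (1 - X) * (2 - X) ^ 2 * F * hθθs + 4 * (2 - X) ^ 4 * hF'

end Duplication

/-- Duplication formula: `(1 − u/2)^{1/2} · ₂F₁(1/2,1/2;1;u) = ₂F₁(1/4,3/4;1;(u/(2−u))²)`,
where `s` is the binomial series `(1 − u/2)^{1/2}` (characterized by `s(0)=1`, `s² = 1 − u/2`)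
and `v = u/(2−u)` is the power series with `(2 − u)·v = u`. -/
theorem hypergeom_duplication (s v : PowerSeries ℚ)
    (hs0 : constantCoeff (R := ℚ) s = 1)
    (hs : s ^ 2 = 1 - PowerSeries.C (R := ℚ) (1 / 2) * X)
    (hv : (2 - X) * v = X) :
    s * hyp (1 / 2) (1 / 2) = pscomp (hyp (1 / 4) (3 / 4)) (v ^ 2) := by
  have hG := duplication_ode_subst hv (isHypergeometric_hyp (1 / 4) (3 / 4))
  rw [← pscomp_eq_subst (constantCoeff_sq_eq_zero_of_two_sub_X_mul hv)] at hG
  refine eq_of_euler_ode ?_ (duplication_ode_mul_sqrt hs (isHypergeometric_hyp _ _)) hG ?_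
  · norm_num [map_ofNat]
  · rw [constantCoeff_pscomp, map_mul, hs0, constantCoeff_hyp, constantCoeff_hyp, one_mul]
end

section
/- Let N(x,y) = N₁(x)y + N₋₁(x)ȳ and S(x,y) = A₁(x)y + A₀(x) + A₋₁(x)ȳ where N₁, A₁, A₀, A₋₁ ∈ ℚ[x, x⁻¹] are Laurent polynomials, N₋₁ ∈ ℚ(x) is a rational function, and the denominator of N₋₁ divides A₁ in ℚ[x, x⁻¹]. Then for all j ∈ ℕ, the part of N·S^j with positive powers of y (extracting terms y^m with m > 0, with coefficients in ℚ(x)) lies in ℚ[x, x⁻¹, y]. -/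
/-!
Write `S = A₁ y + A₀ + A₋₁ ȳ`. By induction on `j`, every coefficient of `Sʲ` is a Laurent
polynomial, and every coefficient of `Sʲ` on `yᵏ` with `k > 0` is `A₁` times a Laurent
polynomial: the recursion `[yᵏ] Sʲ⁺¹ = A₁ [yᵏ⁻¹] Sʲ + A₀ [yᵏ] Sʲ + A₋₁ [yᵏ⁺¹] Sʲ` keeps a
factor `A₁` in every term when `k > 0`. Hence in `[yᵐ] (N Sʲ) = N₁ [yᵐ⁻¹] Sʲ + N₋₁ [yᵐ⁺¹] Sʲ`
the only non-Laurent factor `N₋₁` meets `A₁ = denom N₋₁ · B`, so `N₋₁ A₁ = num N₋₁ · B` is a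
Laurent polynomial.
-/

/-- A rational function is a Laurent polynomial in `x`: `p(x)/x^k` for a polynomial `p`. -/
def IsLaurentPoly (r : RatFunc ℚ) : Prop :=
  ∃ (p : Polynomial ℚ) (k : ℕ),
    r = algebraMap (Polynomial ℚ) (RatFunc ℚ) p / RatFunc.X ^ k

open AddMonoidAlgebra

lemma AddMonoidAlgebra.coeff_single_mul_eq_mul_coeff_sub {R G : Type*} [Semiring R]
    [AddCommGroup G] (a : R) (g k : G) (f : AddMonoidAlgebra R G) :
    (single g a * f).coeff k = a * f.coeff (k - g) := by
  rw [coeff_single_mul_apply, neg_add_eq_sub]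

section ThreeTerm

variable {K : Type*} [CommSemiring K] (R : Subsemiring K) {a b c : K}

lemma coeff_three_term_mul (a b c : K) (f : AddMonoidAlgebra K ℤ) (k : ℤ) :
    ((single 1 a + single 0 b + single (-1) c) * f).coeff k =
      a * f.coeff (k - 1) + b * f.coeff k + c * f.coeff (k + 1) := by
  simp only [add_mul, coeff_add, Finsupp.add_apply, coeff_single_mul_eq_mul_coeff_sub,
    sub_zero, sub_neg_eq_add]

lemma coeff_three_term_pow_mem (ha : a ∈ R) (hb : b ∈ R) (hc : c ∈ R) (j : ℕ) (k : ℤ) :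
    ((single 1 a + single 0 b + single (-1) c) ^ j).coeff k ∈ R := by
  induction j generalizing k with
  | zero =>
    rw [pow_zero, one_def, coeff_single, Finsupp.single_apply]
    split_ifs
    exacts [R.one_mem, R.zero_mem]
  | succ j ih =>
    rw [pow_succ', coeff_three_term_mul]
    exact R.add_mem (R.add_mem (R.mul_mem ha (ih _)) (R.mul_mem hb (ih _))) (R.mul_mem hc (ih _))

lemma exists_coeff_three_term_pow_eq_mul (ha : a ∈ R) (hb : b ∈ R) (hc : c ∈ R) (j : ℕ)
    {k : ℤ} (hk : 0 < k) :
    ∃ d ∈ R, ((single 1 a + single 0 b + single (-1) c) ^ j).coeff k = a * d := by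
  induction j generalizing k with
  | zero =>
    refine ⟨0, R.zero_mem, ?_⟩
    rw [pow_zero, one_def, coeff_single, Finsupp.single_apply, if_neg hk.ne, mul_zero]
  | succ j ih =>
    obtain ⟨d₀, hd₀, hk₀⟩ := ih hk
    obtain ⟨d₁, hd₁, hk₁⟩ := ih (k := k + 1) (by omega)
    refine ⟨_, R.add_mem (R.add_mem (coeff_three_term_pow_mem R ha hb hc j (k - 1))
      (R.mul_mem hb hd₀)) (R.mul_mem hc hd₁), ?_⟩
    rw [pow_succ', coeff_three_term_mul, hk₀, hk₁]
    ring

end ThreeTerm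

lemma RatFunc.mul_algebraMap_denom {K : Type*} [Field K] (r : RatFunc K) :
    r * algebraMap (Polynomial K) (RatFunc K) r.denom =
      algebraMap (Polynomial K) (RatFunc K) r.num := by
  rw [← eq_div_iff (RatFunc.algebraMap_ne_zero r.denom_ne_zero), RatFunc.num_div_denom]

lemma isLaurentPoly_algebraMap (p : Polynomial ℚ) :
    IsLaurentPoly (algebraMap (Polynomial ℚ) (RatFunc ℚ) p) :=
  ⟨p, 0, by simp⟩

lemma IsLaurentPoly.add {r s : RatFunc ℚ} (hr : IsLaurentPoly r) (hs : IsLaurentPoly s) :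
    IsLaurentPoly (r + s) := by
  obtain ⟨p, k, rfl⟩ := hr
  obtain ⟨q, l, rfl⟩ := hs
  refine ⟨p * Polynomial.X ^ l + q * Polynomial.X ^ k, k + l, ?_⟩
  have hX : (RatFunc.X : RatFunc ℚ) ≠ 0 := RatFunc.X_ne_zero
  rw [div_add_div _ _ (pow_ne_zero k hX) (pow_ne_zero l hX), map_add, map_mul, map_mul,
    map_pow, map_pow, RatFunc.algebraMap_X, ← pow_add]
  ring

lemma IsLaurentPoly.mul {r s : RatFunc ℚ} (hr : IsLaurentPoly r) (hs : IsLaurentPoly s) :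
    IsLaurentPoly (r * s) := by
  obtain ⟨p, k, rfl⟩ := hr
  obtain ⟨q, l, rfl⟩ := hs
  exact ⟨p * q, k + l, by rw [map_mul, div_mul_div_comm, pow_add]⟩

/-- The ring `ℚ[x, x⁻¹]` inside `ℚ(x)`. -/
def laurentPolySubsemiring : Subsemiring (RatFunc ℚ) where
  carrier := {r | IsLaurentPoly r}
  zero_mem' := by simpa using isLaurentPoly_algebraMap 0
  one_mem' := by simpa using isLaurentPoly_algebraMap 1
  add_mem' := IsLaurentPoly.add
  mul_mem' := IsLaurentPoly.mul

/-- Let `N = N1(x)·y + Nm1(x)·y⁻¹` and `S = A1(x)·y + A0(x) + Am1(x)·y⁻¹`, viewed as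
Laurent polynomials in `y` (elements of `AddMonoidAlgebra (ℚ(x)) ℤ`), where `N1, A1, A0, Am1`
are Laurent polynomials in `x`, `Nm1 ∈ ℚ(x)`, and the denominator of `Nm1` divides `A1` in
`ℚ[x,x⁻¹]`.  Then for every `j ∈ ℕ`, each coefficient of `N·S^j` on a power `y^m` with
`m > 0` is a Laurent polynomial in `x`. -/
theorem positive_part_laurent
    (N1 A1 A0 Am1 : RatFunc ℚ) (Nm1 : RatFunc ℚ)
    (hN1 : IsLaurentPoly N1) (hA1 : IsLaurentPoly A1)
    (hA0 : IsLaurentPoly A0) (hAm1 : IsLaurentPoly Am1)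
    (hdiv : ∃ B : RatFunc ℚ, IsLaurentPoly B ∧
      A1 = algebraMap (Polynomial ℚ) (RatFunc ℚ) Nm1.denom * B)
    (N S : AddMonoidAlgebra (RatFunc ℚ) ℤ)
    (hN : N = AddMonoidAlgebra.single 1 N1 + AddMonoidAlgebra.single (-1) Nm1)
    (hS : S = AddMonoidAlgebra.single 1 A1 + AddMonoidAlgebra.single 0 A0 +
      AddMonoidAlgebra.single (-1) Am1) :
    ∀ (j : ℕ) (m : ℤ), 0 < m → IsLaurentPoly ((N * S ^ j).coeff m) := by
  intro j m hm
  obtain ⟨B, hB, hA1B⟩ := hdiv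
  have hcoeff : (N * S ^ j).coeff m =
      N1 * (S ^ j).coeff (m - 1) + Nm1 * (S ^ j).coeff (m + 1) := by
    simp only [hN, add_mul, coeff_add, Finsupp.add_apply, coeff_single_mul_eq_mul_coeff_sub,
      sub_neg_eq_add]
  have hlow : IsLaurentPoly ((S ^ j).coeff (m - 1)) := by
    rw [hS]; exact coeff_three_term_pow_mem laurentPolySubsemiring hA1 hA0 hAm1 j _
  obtain ⟨d, hd, hhigh⟩ : ∃ d ∈ laurentPolySubsemiring, (S ^ j).coeff (m + 1) = A1 * d := by
    rw [hS]; exact exists_coeff_three_term_pow_eq_mul _ hA1 hA0 hAm1 j (by omega)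
  have hcancel : Nm1 * (A1 * d) = algebraMap (Polynomial ℚ) (RatFunc ℚ) Nm1.num * B * d := by
    rw [hA1B, ← RatFunc.mul_algebraMap_denom]; ring
  rw [hcoeff, hhigh, hcancel]
  exact hN1.mul hlow |>.add <| ((isLaurentPoly_algebraMap _).mul hB).mul hd
end
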